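/- Let δ > 0. If n ≥ 5, there exists C > 0 depending only on n and δ such that for every λ ∈ (0, 1] and ξ ∈ ∂ℝⁿ₊ with |ξ| ≤ λ, ∫_{B_δ⁺} |∇U_{ξ,λ}(z)|² |z|² dz ≤ C λ². If n = 4, there exists C > 0 depending only on δ such that for every λ ∈ (0, 1/2] and ξ ∈ ∂ℝ⁴₊ with |ξ| ≤ λ, ∫_{B_δ⁺} |∇U_{ξ,λ}(z)|² |z|² dz ≤ C λ² log(1/λ). -/

import Mathlib

open MeasureTheory Real

/-- The sharp constant `S = (π n(n−2))⁻¹ (Γ(n)/Γ(n/2))^{2/n}` in the Sobolev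
inequality on `ℝⁿ`. -/
noncomputable def sobolevS (n : ℕ) : ℝ :=
  (π * n * ((n : ℝ) - 2))⁻¹ * (Real.Gamma n / Real.Gamma ((n : ℝ) / 2)) ^ ((2 : ℝ) / n)

/-- The constant `c(n) = 1/(2^{2/n}(n−2) n S)`. -/
noncomputable def bubbleC (n : ℕ) : ℝ :=
  1 / (2 ^ ((2 : ℝ) / n) * ((n : ℝ) - 2) * n * sobolevS n)

/-- The bubble `U_{x₀,λ}(x) = (λ/(λ² + c(n)|x−x₀|²))^{(n−2)/2}`. -/
noncomputable def bubble (n : ℕ) (x₀ : EuclideanSpace ℝ (Fin n)) (lam : ℝ)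
    (x : EuclideanSpace ℝ (Fin n)) : ℝ :=
  (lam / (lam ^ 2 + bubbleC n * ‖x - x₀‖ ^ 2)) ^ (((n : ℝ) - 2) / 2)

/-- The last coordinate `xₙ` of a point of `ℝⁿ`. -/
noncomputable def xlast (n : ℕ) (x : EuclideanSpace ℝ (Fin n)) : ℝ :=
  if h : n = 0 then 0 else x ⟨n - 1, by omega⟩

/-- The open upper half-space `ℝⁿ₊ = {x : xₙ > 0}`. -/
def upperHalf (n : ℕ) : Set (EuclideanSpace ℝ (Fin n)) := {x | 0 < xlast n x}

/-!
With `r = |z - ξ|` and `D = λ² + c r²`, the gradient of the bubble has length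
`(n - 2) c λ^{(n-2)/2} r D^{-n/2}`. Since `|z| ≤ r + λ` and both `c r²` and `λ²` are at most `D`,
the weighted integrand is `O(λ^{n-2} D^{2-n})`, a radial function of `z - ξ`. Enlarging `B_δ⁺` to
the ball of radius `δ + 1` around `ξ` and passing to polar coordinates leaves
`λ^{n-2} ∫_0^{δ+1} r^{n-1} D^{2-n} dr`. On `[0, λ]` use `D ≥ λ²`, which gives `λ^{4-n}/n`; on
`[λ, δ + 1]` use `D ≥ c r²`, which leaves `c^{2-n} ∫_λ^{δ+1} r^{3-n} dr`. That integral is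
`O(λ^{4-n})` when `n ≥ 5` and equals `log((δ + 1)/λ)` when `n = 4`.
-/

open Metric Set

section Gradient

variable {E : Type*} [NormedAddCommGroup E] [InnerProductSpace ℝ E] [CompleteSpace E]

theorem norm_gradient_comp_norm_sub_sq {φ : ℝ → ℝ} {φ' : ℝ} {ξ z : E}
    (hφ : HasDerivAt φ φ' (‖z - ξ‖ ^ 2)) :
    ‖gradient (fun x => φ (‖x - ξ‖ ^ 2)) z‖ = 2 * |φ'| * ‖z - ξ‖ := by
  have hsq : HasFDerivAt (fun x : E => ‖x - ξ‖ ^ 2) (2 • innerSL ℝ (z - ξ)) z := by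
    simpa using ((hasFDerivAt_id z).sub_const ξ).norm_sq
  have hgrad : gradient (fun x => φ (‖x - ξ‖ ^ 2)) z = _ :=
    (hasFDerivAt_iff_hasGradientAt.mp (hφ.comp_hasFDerivAt z hsq)).gradient
  rw [hgrad, LinearIsometryEquiv.norm_map, norm_smul, RCLike.norm_nsmul ℝ, innerSL_apply_norm,
    Real.norm_eq_abs]
  simp only [nsmul_eq_mul, Nat.cast_ofNat]
  ring

theorem norm_gradient_bubble_profile {c p lam : ℝ} (hc : 0 ≤ c) (hp : 0 ≤ p) (hl : 0 < lam)
    (ξ z : E) :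
    ‖gradient (fun x => (lam / (lam ^ 2 + c * ‖x - ξ‖ ^ 2)) ^ p) z‖ =
      2 * p * c * lam ^ p * ‖z - ξ‖ * (lam ^ 2 + c * ‖z - ξ‖ ^ 2) ^ (-p - 1) := by
  set t₀ := ‖z - ξ‖ ^ 2
  have hD : 0 < lam ^ 2 + c * t₀ := by positivity
  have hrewrite : (fun t => lam ^ p * (lam ^ 2 + c * t) ^ (-p)) =ᶠ[nhds t₀]
      fun t => (lam / (lam ^ 2 + c * t)) ^ p := by
    have hpos : ∀ᶠ t in nhds t₀, 0 < lam ^ 2 + c * t :=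
      ((continuous_const.add (continuous_const.mul continuous_id)).tendsto t₀).eventually
        (lt_mem_nhds hD)
    filter_upwards [hpos] with t ht
    rw [div_rpow hl.le ht.le, rpow_neg ht.le, div_eq_mul_inv]
  have hderiv : HasDerivAt (fun t => (lam / (lam ^ 2 + c * t)) ^ p)
      (lam ^ p * (c * -p * (lam ^ 2 + c * t₀) ^ (-p - 1))) t₀ := by
    refine (HasDerivAt.const_mul _ ?_).congr_of_eventuallyEq hrewrite.symm
    exact (((hasDerivAt_id t₀).const_mul c).const_add _).rpow_const (.inl hD.ne') |>.congr_deriv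
      (by simp)
  rw [norm_gradient_comp_norm_sub_sq hderiv,
    show lam ^ p * (c * -p * (lam ^ 2 + c * t₀) ^ (-p - 1)) =
      -(p * c * lam ^ p * (lam ^ 2 + c * t₀) ^ (-p - 1)) by ring,
    abs_neg, abs_of_nonneg (by positivity)]
  ring

theorem sq_norm_gradient_bubble_profile_mul_sq_norm_le {c p lam : ℝ} (hc : 0 < c) (hp : 0 ≤ p)
    (hl : 0 < lam) {ξ : E} (hξ : ‖ξ‖ ≤ lam) (z : E) :
    ‖gradient (fun x => (lam / (lam ^ 2 + c * ‖x - ξ‖ ^ 2)) ^ p) z‖ ^ 2 * ‖z‖ ^ 2 ≤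
      8 * p ^ 2 * (1 + c) * lam ^ (2 * p) * (lam ^ 2 + c * ‖z - ξ‖ ^ 2) ^ (-2 * p) := by
  rw [norm_gradient_bubble_profile hc.le hp hl]
  set r := ‖z - ξ‖
  set D := lam ^ 2 + c * r ^ 2
  have hD : 0 < D := by positivity
  have hz : ‖z‖ ^ 2 ≤ 2 * (r ^ 2 + lam ^ 2) := by
    have : ‖z‖ ≤ r + lam := (norm_le_norm_sub_add z ξ).trans (by gcongr)
    nlinarith [norm_nonneg z, sq_nonneg (r - lam)]
  have hweight : c ^ 2 * r ^ 2 * ‖z‖ ^ 2 ≤ 2 * (1 + c) * D ^ 2 := by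
    have hcr : c * r ^ 2 ≤ D := by simp only [D]; nlinarith
    have hcl : c * (r ^ 2 + lam ^ 2) ≤ (1 + c) * D := by
      simp only [D]; nlinarith [sq_nonneg lam, mul_nonneg (sq_nonneg c) (sq_nonneg r)]
    calc c ^ 2 * r ^ 2 * ‖z‖ ^ 2 ≤ (c * r ^ 2) * (2 * (c * (r ^ 2 + lam ^ 2))) := by
          nlinarith [mul_le_mul_of_nonneg_left hz (by positivity : 0 ≤ c ^ 2 * r ^ 2)]
      _ ≤ D * (2 * ((1 + c) * D)) := by gcongr
      _ = 2 * (1 + c) * D ^ 2 := by ring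
  have hpow_lam : (lam ^ p) ^ 2 = lam ^ (2 * p) := by
    rw [← rpow_mul_natCast hl.le]; ring_nf
  have hpow_D : (D ^ (-p - 1)) ^ 2 * D ^ 2 = D ^ (-2 * p) := by
    rw [← rpow_mul_natCast hD.le, ← rpow_natCast D 2, ← rpow_add hD]; ring_nf
  calc (2 * p * c * lam ^ p * r * D ^ (-p - 1)) ^ 2 * ‖z‖ ^ 2
      = 4 * p ^ 2 * (lam ^ p) ^ 2 * (D ^ (-p - 1)) ^ 2 * (c ^ 2 * r ^ 2 * ‖z‖ ^ 2) := by ring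
    _ ≤ 4 * p ^ 2 * (lam ^ p) ^ 2 * (D ^ (-p - 1)) ^ 2 * (2 * (1 + c) * D ^ 2) := by gcongr
    _ = 8 * p ^ 2 * (1 + c) * lam ^ (2 * p) * D ^ (-2 * p) := by
        rw [← hpow_lam, ← hpow_D]; ring

end Gradient

theorem setIntegral_ball_fun_norm_sub {E : Type*} [NormedAddCommGroup E] [NormedSpace ℝ E]
    [Nontrivial E] [FiniteDimensional ℝ E] [MeasurableSpace E] [BorelSpace E]
    (μ : Measure E) [μ.IsAddHaarMeasure] (f : ℝ → ℝ) (ξ : E) {R : ℝ} (hR : 0 ≤ R) :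
    ∫ z in ball ξ R, f ‖z - ξ‖ ∂μ =
      Module.finrank ℝ E * μ.real (ball 0 1) *
        ∫ r in (0 : ℝ)..R, r ^ (Module.finrank ℝ E - 1) * f r := by
  have hcenter : ∫ z in ball ξ R, f ‖z - ξ‖ ∂μ = ∫ z, (Iio R).indicator f ‖z‖ ∂μ := by
    rw [← integral_indicator measurableSet_ball, ← integral_add_right_eq_self _ ξ]
    congr 1 with z
    by_cases hz : ‖z‖ < R <;> simp [indicator, hz]
  have hradial : ∀ r : ℝ, r ^ (Module.finrank ℝ E - 1) • (Iio R).indicator f r =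
      (Iio R).indicator (fun r => r ^ (Module.finrank ℝ E - 1) * f r) r := by
    intro r
    by_cases hr : r < R <;> simp [indicator, hr]
  rw [hcenter, integral_fun_norm_addHaar, nsmul_eq_mul, smul_eq_mul, mul_assoc,
    integral_congr_ae (.of_forall hradial), setIntegral_indicator measurableSet_Iio,
    Ioi_inter_Iio, intervalIntegral.integral_of_le hR, integral_Ioc_eq_integral_Ioo]

section RadialProfile

variable {d : ℕ} {c lam : ℝ}

theorem continuous_bubble_radial (hc : 0 ≤ c) (hl : 0 < lam) :
    Continuous fun r : ℝ => r ^ (d - 1) * (lam ^ 2 + c * r ^ 2) ^ (2 - (d : ℝ)) := by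
  have hbase : Continuous fun r : ℝ => lam ^ 2 + c * r ^ 2 := by fun_prop
  exact (continuous_pow _).mul <| hbase.rpow_const fun r => .inl (by positivity)

theorem integral_bubble_radial_head_le (hd : 2 ≤ d) (hc : 0 ≤ c) (hl : 0 < lam) :
    ∫ r in (0 : ℝ)..lam, r ^ (d - 1) * (lam ^ 2 + c * r ^ 2) ^ (2 - (d : ℝ)) ≤
      lam ^ (4 - (d : ℝ)) / d := by
  have hd' : (2 : ℝ) ≤ d := by exact_mod_cast hd
  calc ∫ r in (0 : ℝ)..lam, r ^ (d - 1) * (lam ^ 2 + c * r ^ 2) ^ (2 - (d : ℝ))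
      ≤ ∫ r in (0 : ℝ)..lam, r ^ (d - 1) * (lam ^ 2) ^ (2 - (d : ℝ)) := by
        refine intervalIntegral.integral_mono_on hl.le
          ((continuous_bubble_radial hc hl).intervalIntegrable _ _)
          (((continuous_pow _).mul continuous_const).intervalIntegrable _ _) fun r hr => ?_
        gcongr ?_ * ?_
        · exact pow_nonneg hr.1 _
        · exact rpow_le_rpow_of_nonpos (by positivity) (by nlinarith) (by linarith)
    _ = lam ^ (4 - (d : ℝ)) / d := by
        rw [intervalIntegral.integral_mul_const, integral_pow, Nat.sub_add_cancel (by omega),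
          Nat.cast_sub (by omega), Nat.cast_one, sub_add_cancel, zero_pow (by omega), sub_zero,
          ← rpow_natCast, ← rpow_natCast, ← rpow_mul hl.le, div_mul_eq_mul_div,
          ← rpow_add hl]
        ring_nf

theorem integral_bubble_radial_tail_le (hd : 2 ≤ d) (hc : 0 < c) (hl : 0 < lam) {R : ℝ}
    (hlR : lam ≤ R) :
    ∫ r in lam..R, r ^ (d - 1) * (lam ^ 2 + c * r ^ 2) ^ (2 - (d : ℝ)) ≤
      c ^ (2 - (d : ℝ)) * ∫ r in lam..R, r ^ (3 - (d : ℝ)) := by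
  rw [← intervalIntegral.integral_const_mul]
  refine intervalIntegral.integral_mono_on hlR
    ((continuous_bubble_radial hc.le hl).intervalIntegrable _ _)
    ((intervalIntegral.intervalIntegrable_rpow (.inr ?_)).const_mul _) fun r hr => ?_
  · rw [uIcc_of_le hlR]; exact fun h => (h.1.trans_lt' hl).false
  have hr : 0 < r := hl.trans_le hr.1
  have hd' : (2 : ℝ) ≤ d := by exact_mod_cast hd
  calc r ^ (d - 1) * (lam ^ 2 + c * r ^ 2) ^ (2 - (d : ℝ))
      ≤ r ^ (d - 1) * (c * r ^ 2) ^ (2 - (d : ℝ)) := by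
        refine mul_le_mul_of_nonneg_left ?_ (by positivity)
        exact rpow_le_rpow_of_nonpos (by positivity) (by nlinarith) (by linarith)
    _ = c ^ (2 - (d : ℝ)) * r ^ (3 - (d : ℝ)) := by
        rw [mul_rpow hc.le (sq_nonneg r), ← rpow_natCast, ← rpow_natCast, ← rpow_mul hr.le,
          Nat.cast_sub (by omega), mul_left_comm, ← rpow_add hr]
        ring_nf

theorem integral_bubble_radial_le (hd : 2 ≤ d) (hc : 0 < c) (hl : 0 < lam) {R : ℝ}
    (hlR : lam ≤ R) :
    ∫ r in (0 : ℝ)..R, r ^ (d - 1) * (lam ^ 2 + c * r ^ 2) ^ (2 - (d : ℝ)) ≤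
      lam ^ (4 - (d : ℝ)) / d + c ^ (2 - (d : ℝ)) * ∫ r in lam..R, r ^ (3 - (d : ℝ)) := by
  have hcont := continuous_bubble_radial (d := d) hc.le hl
  rw [← intervalIntegral.integral_add_adjacent_intervals (hcont.intervalIntegrable 0 lam)
    (hcont.intervalIntegrable lam R)]
  exact add_le_add (integral_bubble_radial_head_le hd hc.le hl)
    (integral_bubble_radial_tail_le hd hc hl hlR)

end RadialProfile

theorem integral_rpow_le_of_lt_neg_one {s a b : ℝ} (hs : s < -1) (ha : 0 < a) (hab : a ≤ b) :
    ∫ r in a..b, r ^ s ≤ a ^ (s + 1) / -(s + 1) := by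
  have h0 : (0 : ℝ) ∉ uIcc a b := by
    rw [uIcc_of_le hab]; exact fun h => (h.1.trans_lt' ha).false
  rw [integral_rpow (.inr ⟨hs.ne, h0⟩), sub_div, div_neg]
  linarith [div_nonpos_of_nonneg_of_nonpos (rpow_nonneg (ha.le.trans hab) (s + 1))
    (by linarith : s + 1 ≤ 0)]

theorem bubbleC_pos {n : ℕ} (hn : 3 ≤ n) : 0 < bubbleC n := by
  have h2 : (2 : ℝ) < n := by exact_mod_cast hn
  have hΓn := Real.Gamma_pos_of_pos (show (0 : ℝ) < n by linarith)
  have hΓn2 := Real.Gamma_pos_of_pos (show (0 : ℝ) < n / 2 by linarith)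
  have : 0 < (n : ℝ) - 2 := by linarith
  unfold bubbleC sobolevS
  positivity

noncomputable def bubbleEnergyConst (n : ℕ) : ℝ :=
  n * volume.real (ball (0 : EuclideanSpace ℝ (Fin n)) 1) *
    (2 * ((n : ℝ) - 2) ^ 2 * (1 + bubbleC n))

theorem bubbleEnergyConst_pos {n : ℕ} (hn : 3 ≤ n) : 0 < bubbleEnergyConst n := by
  have hvol := ENNReal.toReal_pos
    (measure_ball_pos volume (0 : EuclideanSpace ℝ (Fin n)) one_pos).ne' measure_ball_lt_top.ne
  have hn' : 0 < (n : ℝ) - 2 := by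
    have : (3 : ℝ) ≤ n := by exact_mod_cast hn
    linarith
  have hc := bubbleC_pos hn
  unfold bubbleEnergyConst
  positivity

theorem setIntegral_sq_norm_gradient_bubble_mul_sq_norm_le {n : ℕ} (hn : 3 ≤ n) {δ lam : ℝ}
    (hδ : 0 < δ) (hl : 0 < lam) (hl1 : lam ≤ 1) {ξ : EuclideanSpace ℝ (Fin n)} (hξ : ‖ξ‖ ≤ lam)
    {s : Set (EuclideanSpace ℝ (Fin n))} (hs : s ⊆ ball 0 δ) :
    ∫ z in s, ‖gradient (bubble n ξ lam) z‖ ^ 2 * ‖z‖ ^ 2 ≤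
      bubbleEnergyConst n * lam ^ ((n : ℝ) - 2) *
        ∫ r in (0 : ℝ)..δ + 1, r ^ (n - 1) * (lam ^ 2 + bubbleC n * r ^ 2) ^ (2 - (n : ℝ)) := by
  set c := bubbleC n
  have hc : 0 < c := bubbleC_pos hn
  have hn' : (3 : ℝ) ≤ n := by exact_mod_cast hn
  set K := 2 * ((n : ℝ) - 2) ^ 2 * (1 + c)
  set f : ℝ → ℝ := fun r => K * lam ^ ((n : ℝ) - 2) * (lam ^ 2 + c * r ^ 2) ^ (2 - (n : ℝ))
  have hf : Continuous fun z : EuclideanSpace ℝ (Fin n) => f ‖z - ξ‖ := by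
    refine continuous_const.mul <| Continuous.rpow_const (by fun_prop) fun z => .inl ?_
    positivity
  have hf_int : IntegrableOn (fun z => f ‖z - ξ‖) (ball ξ (δ + 1)) :=
    (hf.continuousOn.integrableOn_compact (isCompact_closedBall ξ (δ + 1))).mono_set
      ball_subset_closedBall
  have hpointwise (z : EuclideanSpace ℝ (Fin n)) :
      ‖gradient (bubble n ξ lam) z‖ ^ 2 * ‖z‖ ^ 2 ≤ f ‖z - ξ‖ := by
    have hp : (0 : ℝ) ≤ ((n : ℝ) - 2) / 2 := by linarith
    refine (sq_norm_gradient_bubble_profile_mul_sq_norm_le hc hp hl hξ z).trans_eq ?_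
    rw [show 2 * (((n : ℝ) - 2) / 2) = n - 2 by ring,
      show -2 * (((n : ℝ) - 2) / 2) = 2 - n by ring]
    simp only [f, K]
    ring
  have hs' : s ⊆ ball ξ (δ + 1) := fun z hz => by
    have hz := mem_ball_zero_iff.mp (hs hz)
    rw [mem_ball, dist_eq_norm]
    linarith [norm_sub_le z ξ]
  calc ∫ z in s, ‖gradient (bubble n ξ lam) z‖ ^ 2 * ‖z‖ ^ 2
      ≤ ∫ z in s, f ‖z - ξ‖ :=
        integral_mono_of_nonneg (.of_forall fun z => by positivity) (hf_int.mono_set hs')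
          (.of_forall hpointwise)
    _ ≤ ∫ z in ball ξ (δ + 1), f ‖z - ξ‖ :=
        setIntegral_mono_set hf_int (.of_forall fun z => by positivity) hs'.eventuallyLE
    _ = _ := by
        have : Nontrivial (EuclideanSpace ℝ (Fin n)) :=
          Module.nontrivial_of_finrank_pos (R := ℝ) (by rw [finrank_euclideanSpace_fin]; omega)
        rw [setIntegral_ball_fun_norm_sub volume f ξ (by linarith), finrank_euclideanSpace_fin,
          bubbleEnergyConst, ← intervalIntegral.integral_const_mul,
          ← intervalIntegral.integral_const_mul]
        congr 1 with r
        ring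

theorem exists_weighted_energy_le_of_five_le {n : ℕ} (hn : 5 ≤ n) {δ : ℝ} (hδ : 0 < δ) :
    ∃ C > (0 : ℝ), ∀ lam : ℝ, 0 < lam → lam ≤ 1 → ∀ ξ : EuclideanSpace ℝ (Fin n), ‖ξ‖ ≤ lam →
      ∫ z in ball 0 δ ∩ upperHalf n, ‖gradient (bubble n ξ lam) z‖ ^ 2 * ‖z‖ ^ 2 ≤
        C * lam ^ 2 := by
  set c := bubbleC n
  have hc : 0 < c := bubbleC_pos (by omega)
  have hn' : (5 : ℝ) ≤ n := by exact_mod_cast hn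
  set A := bubbleEnergyConst n
  have hA : 0 < A := bubbleEnergyConst_pos (by omega)
  have hC : 0 < A * (1 / n + c ^ (2 - (n : ℝ)) / (n - 4)) := by
    have : 0 < (n : ℝ) - 4 := by linarith
    positivity
  refine ⟨_, hC, fun lam hl hl1 ξ hξ => ?_⟩
  have hlR : lam ≤ δ + 1 := by linarith
  have htail := integral_rpow_le_of_lt_neg_one (s := 3 - n) (by linarith) hl hlR
  rw [show (3 : ℝ) - n + 1 = 4 - n by ring, show -((4 : ℝ) - n) = n - 4 by ring] at htail
  calc _ ≤ A * lam ^ ((n : ℝ) - 2) *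
        ∫ r in (0 : ℝ)..δ + 1, r ^ (n - 1) * (lam ^ 2 + c * r ^ 2) ^ (2 - (n : ℝ)) :=
        setIntegral_sq_norm_gradient_bubble_mul_sq_norm_le (by omega) hδ hl hl1 hξ
          inter_subset_left
    _ ≤ A * lam ^ ((n : ℝ) - 2) *
        (lam ^ (4 - (n : ℝ)) / n + c ^ (2 - (n : ℝ)) * (lam ^ (4 - (n : ℝ)) / (n - 4))) := by
        gcongr
        exact (integral_bubble_radial_le (by omega) hc hl hlR).trans (by gcongr)
    _ = A * (1 / n + c ^ (2 - (n : ℝ)) / (n - 4)) *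
        (lam ^ ((n : ℝ) - 2) * lam ^ (4 - (n : ℝ))) := by ring
    _ = A * (1 / n + c ^ (2 - (n : ℝ)) / (n - 4)) * lam ^ 2 := by
        rw [← rpow_add hl]; norm_num

theorem exists_weighted_energy_le_of_eq_four {n : ℕ} (hn : n = 4) {δ : ℝ} (hδ : 0 < δ) :
    ∃ C > (0 : ℝ), ∀ lam : ℝ, 0 < lam → lam ≤ 1 / 2 →
      ∀ ξ : EuclideanSpace ℝ (Fin n), ‖ξ‖ ≤ lam →
        ∫ z in ball 0 δ ∩ upperHalf n, ‖gradient (bubble n ξ lam) z‖ ^ 2 * ‖z‖ ^ 2 ≤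
          C * lam ^ 2 * Real.log (1 / lam) := by
  set c := bubbleC n
  have hc : 0 < c := bubbleC_pos (by omega)
  have hn' : (n : ℝ) = 4 := by exact_mod_cast hn
  set A := bubbleEnergyConst n
  have hA : 0 < A := bubbleEnergyConst_pos (by omega)
  have hlog2 : 0 < log 2 := log_pos one_lt_two
  set a := 1 / 4 + c ^ (-2 : ℝ) * log (δ + 1) with ha_def
  have ha : 0 ≤ a := by have := log_nonneg (by linarith : (1 : ℝ) ≤ δ + 1); positivity
  refine ⟨A * (a / log 2 + c ^ (-2 : ℝ)), by positivity, fun lam hl hl2 ξ hξ => ?_⟩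
  have hlR : lam ≤ δ + 1 := by linarith
  have hL : log 2 ≤ log (1 / lam) := log_le_log two_pos (by rw [le_div_iff₀ hl]; linarith)
  have htail : ∫ r in lam..δ + 1, r ^ (3 - (n : ℝ)) = log (δ + 1) + log (1 / lam) := by
    simp_rw [hn', show (3 : ℝ) - 4 = -1 by norm_num, rpow_neg_one]
    rw [integral_inv_of_pos hl (by linarith), div_eq_mul_one_div,
      log_mul (by linarith) (by positivity)]
  have hshift :
      a + c ^ (-2 : ℝ) * log (1 / lam) ≤ (a / log 2 + c ^ (-2 : ℝ)) * log (1 / lam) := by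
    have : a ≤ a / log 2 * log (1 / lam) := by
      rw [div_mul_eq_mul_div, le_div_iff₀ hlog2]; exact mul_le_mul_of_nonneg_left hL ha
    linarith
  calc _ ≤ A * lam ^ ((n : ℝ) - 2) *
        ∫ r in (0 : ℝ)..δ + 1, r ^ (n - 1) * (lam ^ 2 + c * r ^ 2) ^ (2 - (n : ℝ)) :=
        setIntegral_sq_norm_gradient_bubble_mul_sq_norm_le (by omega) hδ hl (by linarith) hξ
          inter_subset_left
    _ ≤ A * lam ^ ((n : ℝ) - 2) *
        (lam ^ (4 - (n : ℝ)) / n + c ^ (2 - (n : ℝ)) * ∫ r in lam..δ + 1, r ^ (3 - (n : ℝ))) := by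
        gcongr
        exact integral_bubble_radial_le (by omega) hc hl hlR
    _ = A * lam ^ 2 * (a + c ^ (-2 : ℝ) * log (1 / lam)) := by
        rw [htail, hn', show (4 : ℝ) - 2 = (2 : ℕ) by norm_num, rpow_natCast, sub_self, rpow_zero,
          show (2 : ℝ) - 4 = -2 by norm_num, ha_def]
        ring
    _ ≤ A * lam ^ 2 * ((a / log 2 + c ^ (-2 : ℝ)) * log (1 / lam)) := by gcongr
    _ = A * (a / log 2 + c ^ (-2 : ℝ)) * lam ^ 2 * log (1 / lam) := by ring

/-- `|z|²`-weighted Dirichlet energy of `U_{ξ,λ}` in `B_δ⁺` for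
boundary points `ξ` with `|ξ| ≤ λ`: it is `O(λ²)` when `n ≥ 5`, and
`O(λ² log(1/λ))` when `n = 4`. -/
theorem weighted_energy (n : ℕ) (δ : ℝ) (hδ : 0 < δ) :
    (5 ≤ n → ∃ C > (0 : ℝ), ∀ lam : ℝ, 0 < lam → lam ≤ 1 →
      ∀ ξ : EuclideanSpace ℝ (Fin n), xlast n ξ = 0 → ‖ξ‖ ≤ lam →
        (∫ z in Metric.ball 0 δ ∩ upperHalf n,
          ‖gradient (bubble n ξ lam) z‖ ^ 2 * ‖z‖ ^ 2) ≤ C * lam ^ 2) ∧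
    (n = 4 → ∃ C > (0 : ℝ), ∀ lam : ℝ, 0 < lam → lam ≤ 1 / 2 →
      ∀ ξ : EuclideanSpace ℝ (Fin n), xlast n ξ = 0 → ‖ξ‖ ≤ lam →
        (∫ z in Metric.ball 0 δ ∩ upperHalf n,
          ‖gradient (bubble n ξ lam) z‖ ^ 2 * ‖z‖ ^ 2) ≤
            C * lam ^ 2 * Real.log (1 / lam)) := by
  constructor
  · intro hn
    obtain ⟨C, hC, hbound⟩ := exists_weighted_energy_le_of_five_le hn hδ
    exact ⟨C, hC, fun lam hl hl1 ξ _ hξ => hbound lam hl hl1 ξ hξ⟩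
  · intro hn
    obtain ⟨C, hC, hbound⟩ := exists_weighted_energy_le_of_eq_four hn hδ
    exact ⟨C, hC, fun lam hl hl2 ξ _ hξ => hbound lam hl hl2 ξ hξ⟩
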